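/- arXiv:1705.02181 — 2 statements merged into one kernel-verified Lean document; each statement's English description precedes it below -/
import Mathlib

section
/- Under the hypotheses of the previous spectral approximation lemma, for any r* > r there exists u* ∈ H with ‖u*‖ = 1, belonging to the closed span of all eigenvectors of A associated with eigenvalues in the interval [η − r*, η + r*], such that ‖u − u*‖ ≤ 2r/r*. -/
/-!
By the spectral theorem for compact self-adjoint operators, the orthogonal complement of the
closed span `K` of the eigenvectors with eigenvalue in `[η - r*, η + r*]` is the closed span of the
remaining eigenvectors, on which `‖A x - η x‖ ≥ r* ‖x‖`. Since `K` and `Kᗮ` are both `A`-invariant,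
the component `w` of `u` in `Kᗮ` satisfies `r* ‖w‖ ≤ ‖A w - η w‖ ≤ ‖A u - η u‖ ≤ r`. Normalising
the projection `v = u - w` of `u` onto `K` moves it by `|1 - ‖v‖| ≤ ‖w‖`, so
`‖u - v / ‖v‖‖ ≤ 2 ‖w‖ ≤ 2 r / r*`.
-/

open Module End Submodule Metric Set RealInnerProductSpace

section

variable {𝕜 E : Type*} [RCLike 𝕜] [NormedAddCommGroup E] [InnerProductSpace 𝕜 E]

theorem Module.End.biSup_eigenspace_mem_invtSubmodule {R M : Type*} [CommRing R]
    [AddCommGroup M] [Module R M] (f : End R M) (s : Set R) :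
    (⨆ μ ∈ s, f.eigenspace μ) ∈ f.invtSubmodule :=
  iSup₂_le fun μ hμ =>
    (eigenspace_mem_invtSubmodule f μ).trans (comap_mono (le_biSup (f.eigenspace ·) hμ))

theorem LinearMap.IsSymmetric.isOrtho_biSup_eigenspace_compl {T : E →ₗ[𝕜] E}
    (hT : T.IsSymmetric) (s : Set 𝕜) :
    (⨆ μ ∈ s, eigenspace T μ) ⟂ (⨆ μ ∈ sᶜ, eigenspace T μ) := by
  simp only [isOrtho_iSup_left, isOrtho_iSup_right]
  intro ν hν μ hμ
  exact hT.orthogonalFamily_eigenspaces.isOrtho fun h => (mem_compl_iff s ν).mp hν (h ▸ hμ)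

theorem Submodule.orthogonal_eq_topologicalClosure_of_isOrtho [CompleteSpace E]
    {U V : Submodule 𝕜 E} (hUV : U ⟂ V) (hUV' : (U ⊔ V)ᗮ = ⊥) :
    Uᗮ = V.topologicalClosure := by
  have hle : V.topologicalClosure ≤ Uᗮ :=
    V.topologicalClosure_minimal (isOrtho_iff_le.mp hUV.symm) U.isClosed_orthogonal
  have : CompleteSpace V.topologicalClosure := V.isClosed_topologicalClosure.completeSpace_coe
  -- orthomodularity: `Uᗮ = closure V ⊔ (Vᗮ ⊓ Uᗮ)`, and `Vᗮ ⊓ Uᗮ = (U ⊔ V)ᗮ = ⊥`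
  rw [← sup_orthogonal_inf_of_hasOrthogonalProjection hle, orthogonal_closure, inf_orthogonal,
    sup_comm V, hUV', sup_bot_eq]

theorem IsCompactOperator.orthogonal_biSup_eigenspace_eq_topologicalClosure_compl
    [CompleteSpace E] {T : E →L[𝕜] E} (hT : IsCompactOperator T)
    (hT' : (T : E →ₗ[𝕜] E).IsSymmetric) (s : Set 𝕜) :
    (⨆ μ ∈ s, eigenspace (T : E →ₗ[𝕜] E) μ)ᗮ =
      (⨆ μ ∈ sᶜ, eigenspace (T : E →ₗ[𝕜] E) μ).topologicalClosure := by
  refine orthogonal_eq_topologicalClosure_of_isOrtho (hT'.isOrtho_biSup_eigenspace_compl s) ?_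
  rw [← iSup_union, union_compl_self, iSup_univ]
  exact ContinuousLinearMap.orthogonalComplement_iSup_eigenspaces_eq_bot hT hT'

theorem OrthogonalFamily.mul_norm_le_norm_of_mem_iSup {ι : Type*} {V : ι → Submodule 𝕜 E}
    (hV : OrthogonalFamily 𝕜 (fun i => V i) fun i => (V i).subtypeₗᵢ) {T : E →ₗ[𝕜] E}
    (hTV : ∀ i, ∀ x ∈ V i, T x ∈ V i) {c : ℝ} (hc : 0 ≤ c)
    (hcV : ∀ i, ∀ x ∈ V i, c * ‖x‖ ≤ ‖T x‖) {x : E} (hx : x ∈ ⨆ i, V i) :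
    c * ‖x‖ ≤ ‖T x‖ := by
  obtain ⟨s, hs⟩ := mem_iSup_iff_exists_finset.mp hx
  obtain ⟨v, rfl⟩ := (mem_iSup_finset_iff_exists_sum V _).mp hs
  have hpyth : ∀ w : ∀ i, V i, ‖∑ i ∈ s, (w i : E)‖ ^ 2 = ∑ i ∈ s, ‖(w i : E)‖ ^ 2 :=
    hV.norm_sum (s := s)
  have hsq : (c * ‖∑ i ∈ s, (v i : E)‖) ^ 2 ≤ ‖T (∑ i ∈ s, (v i : E))‖ ^ 2 := by
    rw [map_sum, mul_pow, hpyth v, hpyth fun i => ⟨T (v i), hTV i _ (v i).2⟩, Finset.mul_sum]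
    exact Finset.sum_le_sum fun i _ => by
      rw [← mul_pow]; exact pow_le_pow_left₀ (by positivity) (hcV i _ (v i).2) 2
  exact le_of_sq_le_sq hsq (norm_nonneg _)

theorem LinearMap.IsSymmetric.mul_norm_le_norm_sub_smul_of_mem_biSup_eigenspace
    {T : E →ₗ[𝕜] E} (hT : T.IsSymmetric) {η : 𝕜} {ρ : ℝ} (hρ : 0 ≤ ρ) {x : E}
    (hx : x ∈ ⨆ μ ∈ (closedBall η ρ)ᶜ, eigenspace T μ) :
    ρ * ‖x‖ ≤ ‖T x - η • x‖ := by
  rw [iSup_subtype'] at hx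
  have hshift : ∀ μ : ↥(closedBall η ρ)ᶜ, ∀ y ∈ eigenspace T μ, T y - η • y = ((μ : 𝕜) - η) • y :=
    fun μ y hy => by rw [mem_eigenspace_iff.mp hy, sub_smul]
  refine (hT.orthogonalFamily_eigenspaces.comp Subtype.coe_injective).mul_norm_le_norm_of_mem_iSup
    (T := T - η • LinearMap.id) (fun μ y hy => ?_) hρ (fun μ y hy => ?_) hx
  · simpa [hshift μ y hy] using (eigenspace T μ).smul_mem _ hy
  · have hμ : ρ < ‖(μ : 𝕜) - η‖ := by
      rw [← dist_eq_norm, ← not_le, ← mem_closedBall]; exact μ.2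
    simpa [hshift μ y hy, norm_smul] using mul_le_mul_of_nonneg_right hμ.le (norm_nonneg y)

theorem IsCompactOperator.mul_norm_le_norm_sub_smul_of_mem_orthogonal_biSup_eigenspace
    [CompleteSpace E] {T : E →L[𝕜] E} (hT : IsCompactOperator T)
    (hT' : (T : E →ₗ[𝕜] E).IsSymmetric) {η : 𝕜} {ρ : ℝ} (hρ : 0 ≤ ρ) {x : E}
    (hx : x ∈ (⨆ μ ∈ closedBall η ρ, eigenspace (T : E →ₗ[𝕜] E) μ)ᗮ) :
    ρ * ‖x‖ ≤ ‖T x - η • x‖ := by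
  rw [hT.orthogonal_biSup_eigenspace_eq_topologicalClosure_compl hT'] at hx
  have hclosed : IsClosed {x : E | ρ * ‖x‖ ≤ ‖T x - η • x‖} :=
    isClosed_le (by fun_prop) (by fun_prop)
  exact closure_minimal (fun y hy => hT'.mul_norm_le_norm_sub_smul_of_mem_biSup_eigenspace hρ hy)
    hclosed hx

theorem Submodule.norm_le_norm_add_of_mem_orthogonal {K : Submodule 𝕜 E} {x y : E}
    (hx : x ∈ K) (hy : y ∈ Kᗮ) : ‖y‖ ≤ ‖x + y‖ := by
  have hpyth := norm_add_sq_eq_norm_sq_add_norm_sq_of_inner_eq_zero x y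
    (K.inner_right_of_mem_orthogonal hx hy)
  exact le_of_sq_le_sq (by nlinarith [sq_nonneg ‖x‖]) (norm_nonneg _)

theorem LinearMap.IsSymmetric.norm_apply_sub_starProjection_le {T : E →ₗ[𝕜] E}
    (hT : T.IsSymmetric) {K : Submodule 𝕜 E} [K.HasOrthogonalProjection]
    (hK : K ∈ invtSubmodule T) (u : E) :
    ‖T (u - K.starProjection u)‖ ≤ ‖T u‖ := by
  have hKT := (mem_invtSubmodule_iff_forall_mem_of_mem _).mp hK
  have hKperpT := (mem_invtSubmodule_iff_forall_mem_of_mem _).mp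
    (hT.orthogonalComplement_mem_invtSubmodule hK)
  calc ‖T (u - K.starProjection u)‖
      ≤ ‖T (K.starProjection u) + T (u - K.starProjection u)‖ :=
        norm_le_norm_add_of_mem_orthogonal (hKT _ (K.starProjection_apply_mem u))
          (hKperpT _ (K.sub_starProjection_mem_orthogonal u))
    _ = ‖T u‖ := by rw [← map_add, add_sub_cancel]

theorem norm_sub_inv_norm_smul_le {F : Type*} [NormedAddCommGroup F] [NormedSpace ℝ F]
    {u : F} (hu : ‖u‖ = 1) (v : F) : ‖u - ‖v‖⁻¹ • v‖ ≤ 2 * ‖u - v‖ := by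
  rcases eq_or_ne v 0 with rfl | hv
  · simp [hu]
  have hnorm : ‖v - ‖v‖⁻¹ • v‖ = |‖v‖ - ‖u‖| := by
    have hsplit : v - ‖v‖⁻¹ • v = (‖v‖ - 1) • (‖v‖⁻¹ • v) := by
      rw [smul_smul, sub_mul, mul_inv_cancel₀ (norm_ne_zero_iff.mpr hv), one_mul, sub_smul,
        one_smul]
    rw [hsplit, norm_smul, norm_smul, norm_inv, norm_norm,
      inv_mul_cancel₀ (norm_ne_zero_iff.mpr hv), mul_one, Real.norm_eq_abs, hu]
  calc ‖u - ‖v‖⁻¹ • v‖ ≤ ‖u - v‖ + ‖v - ‖v‖⁻¹ • v‖ := norm_sub_le_norm_sub_add_norm_sub _ _ _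
    _ ≤ ‖u - v‖ + ‖u - v‖ := by rw [hnorm, norm_sub_rev u]; gcongr; exact abs_norm_sub_norm_le _ _
    _ = 2 * ‖u - v‖ := by ring

end

theorem nearby_eigenvector_general
    {H : Type*} [NormedAddCommGroup H] [InnerProductSpace ℝ H] [CompleteSpace H]
    (A : H →L[ℝ] H)
    (hcomp : IsCompactOperator A)
    (hsa : ∀ x y : H, ⟪A x, y⟫ = ⟪x, A y⟫)
    (u : H) (hu : ‖u‖ = 1)
    (η r : ℝ)
    (hAu : ‖A u - η • u‖ ≤ r)
    (rs : ℝ) (hrs : r < rs) :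
    ∃ u' : H, ‖u'‖ = 1 ∧
      u' ∈ (⨆ t ∈ Set.Icc (η - rs) (η + rs),
              Module.End.eigenspace (A : H →ₗ[ℝ] H) t).topologicalClosure ∧
      ‖u - u'‖ ≤ 2 * r / rs := by
  have hsym : (A : H →ₗ[ℝ] H).IsSymmetric := hsa
  have hrs₀ : 0 < rs := ((norm_nonneg _).trans hAu).trans_lt hrs
  rw [← Real.closedBall_eq_Icc]
  set K := (⨆ t ∈ closedBall η rs, eigenspace (A : H →ₗ[ℝ] H) t).topologicalClosure
  set v := K.starProjection u
  have hKA : K ∈ invtSubmodule (A : H →ₗ[ℝ] H) :=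
    topologicalClosure_mem_invtSubmodule (biSup_eigenspace_mem_invtSubmodule _ _)
  have hKT : K ∈ invtSubmodule ((A : H →ₗ[ℝ] H) - η • LinearMap.id) :=
    fun x hx => K.sub_mem (hKA hx) (K.smul_mem η hx)
  have hgap : rs * ‖u - v‖ ≤ ‖A (u - v) - η • (u - v)‖ :=
    hcomp.mul_norm_le_norm_sub_smul_of_mem_orthogonal_biSup_eigenspace hsym hrs₀.le
      (by rw [← orthogonal_closure]; exact K.sub_starProjection_mem_orthogonal u)
  have hproj : ‖A (u - v) - η • (u - v)‖ ≤ ‖A u - η • u‖ :=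
    (hsym.sub (LinearMap.IsSymmetric.id.smul (conj_trivial η))).norm_apply_sub_starProjection_le
      hKT u
  have hv : v ≠ 0 := by
    rintro hv
    rw [hv, sub_zero, hu] at hgap
    linarith
  refine ⟨‖v‖⁻¹ • v, norm_smul_inv_norm (𝕜 := ℝ) hv,
    K.smul_mem _ (K.starProjection_apply_mem u), ?_⟩
  calc ‖u - ‖v‖⁻¹ • v‖ ≤ 2 * ‖u - v‖ := norm_sub_inv_norm_smul_le hu v
    _ ≤ 2 * r / rs := by rw [le_div_iff₀ hrs₀]; linarith

/-- Spectral approximation lemma, second part: under the same hypotheses, for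
any `r* > r` there is a unit vector `u*` in the closed span of the eigenvectors
of `A` corresponding to eigenvalues in `[η - r*, η + r*]` with `‖u - u*‖ ≤ 2r/r*`. -/
theorem nearby_eigenvector
    {H : Type*} [NormedAddCommGroup H] [InnerProductSpace ℝ H] [CompleteSpace H]
    [TopologicalSpace.SeparableSpace H]
    (A : H →L[ℝ] H)
    (hcomp : IsCompactOperator A)
    (hsa : ∀ x y : H, ⟪A x, y⟫ = ⟪x, A y⟫)
    (hpos : ∀ x : H, 0 ≤ ⟪A x, x⟫)
    (u : H) (hu : ‖u‖ = 1)
    (η r : ℝ) (hη : 0 < η) (hr : 0 < r)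
    (hAu : ‖A u - η • u‖ ≤ r)
    (rs : ℝ) (hrs : r < rs) :
    ∃ u' : H, ‖u'‖ = 1 ∧
      u' ∈ (⨆ t ∈ Set.Icc (η - rs) (η + rs),
              Module.End.eigenspace (A : H →ₗ[ℝ] H) t).topologicalClosure ∧
      ‖u - u'‖ ≤ 2 * r / rs :=
  nearby_eigenvector_general A hcomp hsa u hu η r hAu rs hrs
end

section
/- Let u ∈ C²([0,L] × [0,ε₀]) and suppose ∂_t u(s, 0) = c·u(s,0) for all s, where c ∈ ℝ. Then there exists C > 0 such that for all ε ∈ (0, ε₀), |(1/ε)∫_0^L ∫_0^ε u(s,t)²(1 − tκ(s)) dt ds − ∫_0^L u(s,0)² ds| ≤ Cε, where κ : [0,L] → ℝ is continuous. -/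
open MeasureTheory

/-! Being `C¹` on the compact convex rectangle, `u` is Lipschitz there, so on the strip
`(0, L] × (0, ε]` the weighted integrand `u(s,t)² (1 - t κ(s))` differs from `u(s,0)²` by `O(ε)`
uniformly. Integrating over the strip, of area `L ε`, and dividing by `ε` gives the `O(ε)` error. -/

theorem LipschitzOnWith.dist_le_mul_dist_snd {α β γ : Type*} [PseudoMetricSpace α]
    [PseudoMetricSpace β] [PseudoMetricSpace γ] {K : NNReal} {f : α × γ → β} {s : Set (α × γ)}
    (hf : LipschitzOnWith K f s) {x : α} {t t' : γ} (ht : (x, t) ∈ s) (ht' : (x, t') ∈ s) :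
    dist (f (x, t)) (f (x, t')) ≤ K * dist t t' := by
  simpa [Prod.dist_eq] using hf.dist_le_mul _ ht _ ht'

theorem abs_sq_mul_one_sub_sub_sq_le {a b k t ε B D K : ℝ} (ha : |a| ≤ B) (hb : |b| ≤ B)
    (hab : |a - b| ≤ D * t) (hD : 0 ≤ D) (hk : |k| ≤ K) (ht : 0 ≤ t) (htε : t ≤ ε) :
    |a ^ 2 * (1 - t * k) - b ^ 2| ≤ (2 * B * D + K * B ^ 2) * ε := by
  have hB : 0 ≤ B := (abs_nonneg a).trans ha
  have hK : 0 ≤ K := (abs_nonneg k).trans hk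
  have hsq : |a ^ 2| ≤ B ^ 2 := by
    rw [abs_pow]; exact pow_le_pow_left₀ (abs_nonneg a) ha 2
  calc |a ^ 2 * (1 - t * k) - b ^ 2| = |(a + b) * (a - b) - t * k * a ^ 2| := by ring_nf
    _ ≤ |(a + b) * (a - b)| + |t * k * a ^ 2| := abs_sub _ _
    _ = |a + b| * |a - b| + t * |k| * |a ^ 2| := by
        rw [abs_mul, abs_mul, abs_mul, abs_of_nonneg ht]
    _ ≤ (B + B) * (D * t) + t * K * B ^ 2 := by
        gcongr
        exact (abs_add_le a b).trans (add_le_add ha hb)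
    _ = (2 * B * D + K * B ^ 2) * t := by ring
    _ ≤ (2 * B * D + K * B ^ 2) * ε := by gcongr

theorem abs_setIntegral_prod_sub_mul_setIntegral_le {α β : Type*} [MeasurableSpace α]
    [MeasurableSpace β] {μ : Measure α} {ν : Measure β} [SFinite μ] [SFinite ν] {A : Set α}
    {T : Set β} (hA : μ A ≠ ⊤) (hT : ν T ≠ ⊤) {f : α × β → ℝ} {g : α → ℝ} {M : ℝ}
    (hf : IntegrableOn f (A ×ˢ T) (μ.prod ν)) (hg : IntegrableOn g A μ)
    (hfg : ∀ p ∈ A ×ˢ T, |f p - g p.1| ≤ M) :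
    |∫ p in A ×ˢ T, f p ∂μ.prod ν - ν.real T * ∫ s in A, g s ∂μ| ≤ M * (μ.real A * ν.real T) := by
  have : IsFiniteMeasure (ν.restrict T) := isFiniteMeasure_restrict.2 hT
  have hg_fst : IntegrableOn (fun p => g p.1) (A ×ˢ T) (μ.prod ν) := by
    rw [IntegrableOn, ← Measure.prod_restrict]; exact hg.comp_fst _
  have hint_fst : ∫ p in A ×ˢ T, g p.1 ∂μ.prod ν = ν.real T * ∫ s in A, g s ∂μ := by
    rw [← Measure.prod_restrict, integral_fun_fst, measureReal_restrict_apply_univ, smul_eq_mul]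
  have hvol : (μ.prod ν) (A ×ˢ T) < ⊤ := by
    rw [Measure.prod_prod]; exact ENNReal.mul_lt_top hA.lt_top hT.lt_top
  rw [← hint_fst, ← integral_sub hf hg_fst, ← Real.norm_eq_abs, ← measureReal_prod_prod]
  exact norm_setIntegral_le_of_norm_le_const hvol hfg

theorem abs_one_div_mul_setIntegral_strip_sub_le {α : Type*} [MeasurableSpace α]
    {μ : Measure α} [SFinite μ] {A : Set α} (hA : μ A ≠ ⊤) {f : α × ℝ → ℝ} {g : α → ℝ}
    {ε M : ℝ} (hε : 0 < ε) (hf : IntegrableOn f (A ×ˢ Set.Ioc 0 ε) (μ.prod volume))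
    (hg : IntegrableOn g A μ) (hfg : ∀ p ∈ A ×ˢ Set.Ioc 0 ε, |f p - g p.1| ≤ M * ε) :
    |(1 / ε) * ∫ p in A ×ˢ Set.Ioc 0 ε, f p ∂μ.prod volume - ∫ s in A, g s ∂μ|
      ≤ M * μ.real A * ε := by
  have h := abs_setIntegral_prod_sub_mul_setIntegral_le hA measure_Ioc_lt_top.ne hf hg hfg
  rw [Real.volume_real_Ioc_of_le hε.le, sub_zero] at h
  have hrw : (1 / ε) * ∫ p in A ×ˢ Set.Ioc 0 ε, f p ∂μ.prod volume - ∫ s in A, g s ∂μ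
      = (1 / ε) * (∫ p in A ×ˢ Set.Ioc 0 ε, f p ∂μ.prod volume - ε * ∫ s in A, g s ∂μ) := by
    field_simp
  rw [hrw, abs_mul, abs_of_pos (one_div_pos.2 hε)]
  calc 1 / ε * |_| ≤ 1 / ε * (M * ε * (μ.real A * ε)) := by gcongr
    _ = M * μ.real A * ε := by field_simp

section Strip

variable {L ε₀ : ℝ} {u : ℝ × ℝ → ℝ} {κ : ℝ → ℝ}

theorem exists_abs_sq_mul_one_sub_sub_sq_le_on_strip {n : WithTop ℕ∞}
    (hu : ContDiffOn ℝ n u (Set.Icc 0 L ×ˢ Set.Icc 0 ε₀)) (hn : n ≠ 0)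
    (hκ : ContinuousOn κ (Set.Icc 0 L)) :
    ∃ M, ∀ ε ≤ ε₀, ∀ p ∈ Set.Ioc 0 L ×ˢ Set.Ioc 0 ε,
      |u p ^ 2 * (1 - p.2 * κ p.1) - u (p.1, 0) ^ 2| ≤ M * ε := by
  have hS : IsCompact (Set.Icc 0 L ×ˢ Set.Icc 0 ε₀) := isCompact_Icc.prod isCompact_Icc
  obtain ⟨B, hB⟩ := hS.exists_bound_of_continuousOn hu.continuousOn
  obtain ⟨K, hK⟩ := isCompact_Icc.exists_bound_of_continuousOn hκ
  obtain ⟨D, hD⟩ := hu.exists_lipschitzOnWith hn ((convex_Icc _ _).prod (convex_Icc _ _)) hS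
  refine ⟨2 * B * D + K * B ^ 2, fun ε hε ⟨s, t⟩ ⟨hs, ht⟩ => ?_⟩
  have hst : (s, t) ∈ Set.Icc 0 L ×ˢ Set.Icc 0 ε₀ :=
    ⟨Set.Ioc_subset_Icc_self hs, ht.1.le, ht.2.trans hε⟩
  have hs0 : (s, (0 : ℝ)) ∈ Set.Icc 0 L ×ˢ Set.Icc 0 ε₀ := ⟨hst.1, le_rfl, hst.2.1.trans hst.2.2⟩
  have hlip : |u (s, t) - u (s, 0)| ≤ D * t := by
    simpa [Real.dist_eq, abs_of_pos ht.1] using hD.dist_le_mul_dist_snd hst hs0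
  exact abs_sq_mul_one_sub_sub_sq_le (hB _ hst) (hB _ hs0) hlip D.2 (hK s hst.1) ht.1.le ht.2

theorem integrableOn_sq_mul_one_sub_strip (hu : ContinuousOn u (Set.Icc 0 L ×ˢ Set.Icc 0 ε₀))
    (hκ : ContinuousOn κ (Set.Icc 0 L)) {ε : ℝ} (hε : ε ≤ ε₀) :
    IntegrableOn (fun p : ℝ × ℝ => u p ^ 2 * (1 - p.2 * κ p.1)) (Set.Ioc 0 L ×ˢ Set.Ioc 0 ε) :=
  (((hu.pow 2).mul (continuousOn_const.sub
    (continuousOn_snd.mul (hκ.comp continuousOn_fst fun _ hp => hp.1)))).integrableOn_compact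
    (isCompact_Icc.prod isCompact_Icc)).mono_set
    (Set.prod_mono Set.Ioc_subset_Icc_self
      (Set.Ioc_subset_Icc_self.trans (Set.Icc_subset_Icc_right hε)))

theorem integrableOn_sq_boundary (hu : ContinuousOn u (Set.Icc 0 L ×ˢ Set.Icc 0 ε₀))
    (hε₀ : 0 ≤ ε₀) : IntegrableOn (fun s => u (s, 0) ^ 2) (Set.Ioc 0 L) :=
  (((hu.comp (continuousOn_id.prodMk continuousOn_const) fun _ hs =>
    ⟨hs, Set.left_mem_Icc.2 hε₀⟩).pow 2).integrableOn_compact isCompact_Icc).mono_set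
    Set.Ioc_subset_Icc_self

end Strip

theorem strip_average_estimate_general
    (L ε₀ : ℝ)
    (u : ℝ × ℝ → ℝ)
    (hu : ContDiffOn ℝ 2 u (Set.Icc 0 L ×ˢ Set.Icc 0 ε₀))
    (κ : ℝ → ℝ) (hκ : ContinuousOn κ (Set.Icc 0 L)) :
    ∃ C > (0 : ℝ), ∀ ε ∈ Set.Ioo (0 : ℝ) ε₀,
      |(1 / ε) * (∫ p in Set.Ioc 0 L ×ˢ Set.Ioc 0 ε,
            (u p) ^ 2 * (1 - p.2 * κ p.1)) -
          ∫ s in Set.Ioc (0 : ℝ) L, (u (s, 0)) ^ 2| ≤ C * ε := by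
  obtain ⟨M, hM⟩ := exists_abs_sq_mul_one_sub_sub_sq_le_on_strip hu two_ne_zero hκ
  set C := M * volume.real (Set.Ioc (0 : ℝ) L)
  refine ⟨max C 1, lt_max_of_lt_right one_pos, fun ε ⟨hε, hεε₀⟩ => ?_⟩
  calc _ ≤ C * ε := abs_one_div_mul_setIntegral_strip_sub_le measure_Ioc_lt_top.ne hε
        (integrableOn_sq_mul_one_sub_strip hu.continuousOn hκ hεε₀.le)
        (integrableOn_sq_boundary hu.continuousOn (hε.trans hεε₀).le) (hM ε hεε₀.le)
    _ ≤ max C 1 * ε := by gcongr; exact le_max_left _ _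

/-- Boundary-layer averaging estimate: if `u ∈ C²([0,L]×[0,ε₀])` satisfies
`∂_t u(s,0) = c·u(s,0)` for all `s`, and `κ` is continuous on `[0,L]`, then
there exists `C > 0` such that for all `ε ∈ (0,ε₀)`,
`|(1/ε)∫_0^L∫_0^ε u(s,t)²(1 − tκ(s)) dt ds − ∫_0^L u(s,0)² ds| ≤ Cε`. -/
theorem strip_average_estimate
    (L ε₀ c : ℝ) (hL : 0 < L) (hε₀ : 0 < ε₀)
    (u : ℝ × ℝ → ℝ)
    (hu : ContDiffOn ℝ 2 u (Set.Icc 0 L ×ˢ Set.Icc 0 ε₀))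
    (hbc : ∀ s ∈ Set.Icc (0 : ℝ) L,
      derivWithin (fun t => u (s, t)) (Set.Icc 0 ε₀) 0 = c * u (s, 0))
    (κ : ℝ → ℝ) (hκ : ContinuousOn κ (Set.Icc 0 L)) :
    ∃ C > (0 : ℝ), ∀ ε ∈ Set.Ioo (0 : ℝ) ε₀,
      |(1 / ε) * (∫ p in Set.Ioc 0 L ×ˢ Set.Ioc 0 ε,
            (u p) ^ 2 * (1 - p.2 * κ p.1)) -
          ∫ s in Set.Ioc (0 : ℝ) L, (u (s, 0)) ^ 2| ≤ C * ε :=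
  strip_average_estimate_general L ε₀ u hu κ hκ
end
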